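/- Define I(α, β) = ∫_{α}^{∞} φ(u) Φ(u + β) du for α, β ∈ ℝ, where φ and Φ are the standard normal density and CDF. Then for every α ∈ ℝ, I(α, 0) = (1/2)(1 − Φ(α)²), and for every β ∈ ℝ, I(0, β) = Φ(β/√2) − (1/2) Φ(β/√2)². -/

import Mathlib

open MeasureTheory Set

/-- Standard normal density `φ(x) = (1/√(2π)) e^{−x²/2}`. -/
noncomputable def stdNormalPDF (x : ℝ) : ℝ :=
  (Real.sqrt (2 * Real.pi))⁻¹ * Real.exp (-x ^ 2 / 2)

/-- Standard normal CDF `Φ(x) = ∫_{-∞}^x φ(u) du`. -/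
noncomputable def stdNormalCDF (x : ℝ) : ℝ :=
  ∫ u in Set.Iic x, stdNormalPDF u

/-- The integral function `I(α, β) = ∫_α^∞ φ(u) Φ(u + β) du`. -/
noncomputable def intI (α β : ℝ) : ℝ :=
  ∫ u in Set.Ioi α, stdNormalPDF u * stdNormalCDF (u + β)

/-!
`Φ² / 2` is an antiderivative of `φ Φ`, which gives `I(α, 0)`. For `I(0, β)`, differentiate
under the integral sign: completing the square gives
`φ(u) φ(u + β) = φ(β/√2) φ(√2 u + β/√2)`, so `∂_β I(0, β) = φ(β/√2) (1 - Φ(β/√2)) / √2`,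
which is also the derivative of `Φ(β/√2) - Φ(β/√2)² / 2`. Both sides agree at `β = 0`
because `Φ(0) = 1/2`.
-/

open Filter Topology

lemma stdNormalPDF_nonneg (x : ℝ) : 0 ≤ stdNormalPDF x := by
  unfold stdNormalPDF; positivity

lemma stdNormalPDF_le (x : ℝ) : stdNormalPDF x ≤ (Real.sqrt (2 * Real.pi))⁻¹ := by
  unfold stdNormalPDF
  refine mul_le_of_le_one_right (by positivity) (Real.exp_le_one_iff.2 ?_)
  nlinarith [sq_nonneg x]

lemma stdNormalPDF_neg (x : ℝ) : stdNormalPDF (-x) = stdNormalPDF x := by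
  simp only [stdNormalPDF, neg_sq]

lemma continuous_stdNormalPDF : Continuous stdNormalPDF := by
  unfold stdNormalPDF; fun_prop

lemma stdNormalPDF_eq_mul_exp :
    stdNormalPDF = fun x => (Real.sqrt (2 * Real.pi))⁻¹ * Real.exp (-(1 / 2) * x ^ 2) := by
  funext x; unfold stdNormalPDF; ring_nf

lemma integrable_stdNormalPDF : Integrable stdNormalPDF := by
  rw [stdNormalPDF_eq_mul_exp]
  exact (integrable_exp_neg_mul_sq (by norm_num)).const_mul _

lemma integral_stdNormalPDF : ∫ x, stdNormalPDF x = 1 := by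
  rw [stdNormalPDF_eq_mul_exp, integral_const_mul, integral_gaussian,
    show Real.pi / (1 / 2) = 2 * Real.pi by ring]
  exact inv_mul_cancel₀ (by positivity)

lemma stdNormalCDF_nonneg (x : ℝ) : 0 ≤ stdNormalCDF x :=
  setIntegral_nonneg measurableSet_Iic fun u _ => stdNormalPDF_nonneg u

lemma stdNormalCDF_le_one (x : ℝ) : stdNormalCDF x ≤ 1 :=
  integral_stdNormalPDF ▸
    setIntegral_le_integral integrable_stdNormalPDF (ae_of_all _ stdNormalPDF_nonneg)

lemma hasDerivAt_stdNormalCDF (x : ℝ) : HasDerivAt stdNormalCDF (stdNormalPDF x) x := by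
  have hΦ : ∀ y, stdNormalCDF 0 + ∫ t in (0 : ℝ)..y, stdNormalPDF t = stdNormalCDF y := by
    intro y
    rw [← intervalIntegral.integral_Iic_sub_Iic integrable_stdNormalPDF.integrableOn
      integrable_stdNormalPDF.integrableOn]
    simp only [stdNormalCDF, add_sub_cancel]
  refine HasDerivAt.congr_of_eventuallyEq ?_ (Eventually.of_forall fun y => (hΦ y).symm)
  exact (intervalIntegral.integral_hasDerivAt_right integrable_stdNormalPDF.intervalIntegrable
    (continuous_stdNormalPDF.stronglyMeasurableAtFilter _ _)
    continuous_stdNormalPDF.continuousAt).const_add _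

lemma continuous_stdNormalCDF : Continuous stdNormalCDF :=
  continuous_iff_continuousAt.2 fun x => (hasDerivAt_stdNormalCDF x).continuousAt

lemma tendsto_stdNormalCDF_atTop : Tendsto stdNormalCDF atTop (𝓝 1) :=
  integral_stdNormalPDF ▸
    (aecover_Iic tendsto_id).integral_tendsto_of_countably_generated integrable_stdNormalPDF

/-- `u ↦ (Φ(c u + d) - 1) / c` is an antiderivative of the integrand vanishing at `∞`. -/
lemma integral_Ioi_stdNormalPDF_mul_add {c : ℝ} (hc : 0 < c) (a d : ℝ) :
    ∫ u in Ioi a, stdNormalPDF (c * u + d) = (1 - stdNormalCDF (c * a + d)) / c := by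
  have hderiv : ∀ u ∈ Ici a, HasDerivAt (fun u => (stdNormalCDF (c * u + d) - 1) / c)
      (stdNormalPDF (c * u + d)) u := fun u _ => by
    refine ((((hasDerivAt_stdNormalCDF (c * u + d)).comp u
      (((hasDerivAt_id u).const_mul c).add_const d)).sub_const 1).div_const c).congr_deriv ?_
    field_simp
  have hlim : Tendsto (fun u => (stdNormalCDF (c * u + d) - 1) / c) atTop (𝓝 ((1 - 1) / c)) :=
    ((tendsto_stdNormalCDF_atTop.comp (tendsto_atTop_add_const_right _ d
      (tendsto_id.const_mul_atTop hc))).sub_const 1).div_const c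
  rw [integral_Ioi_of_hasDerivAt_of_nonneg' hderiv (fun u _ => stdNormalPDF_nonneg _) hlim]
  ring

lemma stdNormalCDF_zero : stdNormalCDF 0 = 1 / 2 := by
  have htail := integral_Ioi_stdNormalPDF_mul_add one_pos 0 0
  have hsymm : ∫ u in Ioi (0 : ℝ), stdNormalPDF u = stdNormalCDF 0 := by
    simpa [stdNormalPDF_neg, stdNormalCDF] using integral_comp_neg_Ioi 0 stdNormalPDF
  simp only [one_mul, add_zero, div_one, hsymm] at htail
  linarith

/-- Completing the square: `u² + (u + β)² = β² / 2 + (√2 u + β/√2)²`. -/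
lemma stdNormalPDF_mul_stdNormalPDF_add (u β : ℝ) :
    stdNormalPDF u * stdNormalPDF (u + β) =
      stdNormalPDF (β / Real.sqrt 2) * stdNormalPDF (Real.sqrt 2 * u + β / Real.sqrt 2) := by
  have hs : Real.sqrt 2 ^ 2 = 2 := Real.sq_sqrt (by norm_num)
  have hs0 : Real.sqrt 2 ≠ 0 := by positivity
  unfold stdNormalPDF
  rw [mul_mul_mul_comm, mul_mul_mul_comm _ (Real.exp _), ← Real.exp_add, ← Real.exp_add]
  congr 2
  field_simp
  rw [hs]
  ring

lemma hasDerivAt_integral_stdNormalPDF_mul_stdNormalCDF_add (s : Set ℝ) (β : ℝ) :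
    HasDerivAt (fun b => ∫ u in s, stdNormalPDF u * stdNormalCDF (u + b))
      (∫ u in s, stdNormalPDF u * stdNormalPDF (u + β)) β := by
  have hmeas : ∀ b : ℝ, AEStronglyMeasurable (fun u => stdNormalPDF u * stdNormalCDF (u + b))
      (volume.restrict s) := fun b =>
    (continuous_stdNormalPDF.mul (continuous_stdNormalCDF.comp
      (continuous_id.add continuous_const))).aestronglyMeasurable
  have hint :
      Integrable (fun u => stdNormalPDF u * stdNormalCDF (u + β)) (volume.restrict s) := by
    refine integrable_stdNormalPDF.integrableOn.mono' (hmeas β) (ae_of_all _ fun u => ?_)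
    rw [Real.norm_eq_abs,
      abs_of_nonneg (mul_nonneg (stdNormalPDF_nonneg u) (stdNormalCDF_nonneg _))]
    exact mul_le_of_le_one_right (stdNormalPDF_nonneg u) (stdNormalCDF_le_one _)
  refine (hasDerivAt_integral_of_dominated_loc_of_deriv_le (x₀ := β)
    (F' := fun b u => stdNormalPDF u * stdNormalPDF (u + b))
    (bound := fun u => stdNormalPDF u * (Real.sqrt (2 * Real.pi))⁻¹) univ_mem
    (Eventually.of_forall hmeas) hint
    (continuous_stdNormalPDF.mul (continuous_stdNormalPDF.comp
      (continuous_id.add continuous_const))).aestronglyMeasurable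
    (ae_of_all _ fun u b _ => ?_) (integrable_stdNormalPDF.mul_const _).integrableOn
    (ae_of_all _ fun u b _ => ?_)).2
  · rw [Real.norm_eq_abs,
      abs_of_nonneg (mul_nonneg (stdNormalPDF_nonneg u) (stdNormalPDF_nonneg _))]
    exact mul_le_mul_of_nonneg_left (stdNormalPDF_le _) (stdNormalPDF_nonneg u)
  · simpa using ((hasDerivAt_stdNormalCDF (u + b)).comp b
      ((hasDerivAt_id b).const_add u)).const_mul (stdNormalPDF u)

lemma hasDerivAt_intI_zero_left (β : ℝ) :
    HasDerivAt (intI 0)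
      (stdNormalPDF (β / Real.sqrt 2) * ((1 - stdNormalCDF (β / Real.sqrt 2)) / Real.sqrt 2)) β := by
  have h := hasDerivAt_integral_stdNormalPDF_mul_stdNormalCDF_add (Ioi 0) β
  simp_rw [stdNormalPDF_mul_stdNormalPDF_add _ β, integral_const_mul,
    integral_Ioi_stdNormalPDF_mul_add (Real.sqrt_pos.2 two_pos), mul_zero, zero_add] at h
  exact h

lemma hasDerivAt_stdNormalCDF_sub_sq_div_two (t : ℝ) :
    HasDerivAt (fun t => stdNormalCDF t - stdNormalCDF t ^ 2 / 2)
      (stdNormalPDF t * (1 - stdNormalCDF t)) t := by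
  refine ((hasDerivAt_stdNormalCDF t).sub
    (((hasDerivAt_stdNormalCDF t).pow 2).div_const 2)).congr_deriv ?_
  push_cast
  ring

lemma intI_zero_right (α : ℝ) : intI α 0 = 1 / 2 * (1 - stdNormalCDF α ^ 2) := by
  have hderiv : ∀ x ∈ Ici α, HasDerivAt (fun y => stdNormalCDF y ^ 2 / 2)
      (stdNormalPDF x * stdNormalCDF x) x := fun x _ => by
    refine (((hasDerivAt_stdNormalCDF x).pow 2).div_const 2).congr_deriv ?_
    push_cast
    ring
  have hlim : Tendsto (fun y => stdNormalCDF y ^ 2 / 2) atTop (𝓝 (1 ^ 2 / 2)) :=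
    (tendsto_stdNormalCDF_atTop.pow 2).div_const 2
  simp only [intI, add_zero]
  rw [integral_Ioi_of_hasDerivAt_of_nonneg' hderiv
    (fun x _ => mul_nonneg (stdNormalPDF_nonneg x) (stdNormalCDF_nonneg x)) hlim]
  ring

lemma intI_zero_left (β : ℝ) : intI 0 β =
    stdNormalCDF (β / Real.sqrt 2) - 1 / 2 * stdNormalCDF (β / Real.sqrt 2) ^ 2 := by
  set G : ℝ → ℝ := fun b =>
    stdNormalCDF (b / Real.sqrt 2) - stdNormalCDF (b / Real.sqrt 2) ^ 2 / 2
  have hdiff : ∀ b, HasDerivAt (fun b => intI 0 b - G b) 0 b := fun b => by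
    have hG := (hasDerivAt_stdNormalCDF_sub_sq_div_two (b / Real.sqrt 2)).comp b
      ((hasDerivAt_id b).div_const (Real.sqrt 2))
    refine ((hasDerivAt_intI_zero_left b).sub hG).congr_deriv ?_
    ring
  have hconst := is_const_of_deriv_eq_zero (fun b => (hdiff b).differentiableAt)
    (fun b => (hdiff b).deriv) β 0
  simp only [G, zero_div, intI_zero_right, stdNormalCDF_zero] at hconst
  norm_num at hconst
  linarith

theorem intI_special_values :
    (∀ α : ℝ, intI α 0 = 1 / 2 * (1 - (stdNormalCDF α) ^ 2)) ∧
      (∀ β : ℝ, intI 0 β =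
        stdNormalCDF (β / Real.sqrt 2) - 1 / 2 * (stdNormalCDF (β / Real.sqrt 2)) ^ 2) :=
  ⟨intI_zero_right, intI_zero_left⟩
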